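/- arXiv:1210.0282 — 3 statements merged into one kernel-verified Lean document; each statement's English description precedes it below -/
import Mathlib

section
/- Let x₀ = t/3^k with k, t ∈ ℕ, k ≥ 1, 0 < t < 3^k, and gcd(t,3) = 1. Let m ∈ ℝ be such that for all integers p, q and all natural numbers r, s, m ≠ (q·2^{r-s}·3^k)/(p·3^k − t·2^r) (whenever the denominator is nonzero). Then the line y = m(x − x₀) contains no point of the form (a/2^c, b/2^d) with a, b ∈ ℤ and c, d ∈ ℕ. -/
/-! A dyadic point `(a / 2^c, b / 2^d)` on the line forces `m = b 2^c 3^k / ((a 3^k - t 2^c) 2^d)`,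
and the denominator cannot vanish: `3 ∣ a 3^k` while `3 ∤ t 2^c`. -/

theorem Int.mul_three_pow_ne_mul_two_pow {k : ℕ} (hk : k ≠ 0) {t : ℤ} (ht : ¬ 3 ∣ t)
    (a : ℤ) (c : ℕ) : a * 3 ^ k ≠ t * 2 ^ c := by
  intro h
  have h3 : (3 : ℤ) ∣ t * 2 ^ c := h ▸ (dvd_pow_self 3 hk).mul_left a
  rcases Int.prime_three.dvd_mul.mp h3 with h3t | h32
  · exact ht h3t
  · have := Int.prime_three.dvd_of_dvd_pow h32
    norm_num at this

theorem slope_eq_of_div_eq_mul_sub_div {K : Type*} [Field K] {a b t m C D T : K}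
    (hC : C ≠ 0) (hD : D ≠ 0) (hT : T ≠ 0) (hden : a * T - t * C ≠ 0)
    (h : b / D = m * (a / C - t / T)) :
    m = b * C * T / ((a * T - t * C) * D) := by
  rw [eq_div_iff (mul_ne_zero hden hD)]
  rw [div_sub_div _ _ hC hT, div_eq_iff hD] at h
  field_simp at h
  linear_combination -h

theorem T_fractal_slope_avoids_dyadic_general (k t : ℕ) (hk : 1 ≤ k) (htcop : Nat.gcd t 3 = 1) (m : ℝ)
    (hm : ∀ (p q : ℤ) (r s : ℕ), (p : ℝ) * 3 ^ k - (t : ℝ) * 2 ^ r ≠ 0 →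
      m ≠ ((q : ℝ) * 2 ^ r * 3 ^ k) / (((p : ℝ) * 3 ^ k - (t : ℝ) * 2 ^ r) * 2 ^ s)) :
    ∀ (a b : ℤ) (c d : ℕ),
      (b : ℝ) / 2 ^ d ≠ m * ((a : ℝ) / 2 ^ c - (t : ℝ) / 3 ^ k) := by
  intro a b c d hline
  have h3t : ¬ (3 : ℤ) ∣ t := by
    exact_mod_cast (Nat.Prime.coprime_iff_not_dvd Nat.prime_three).1 (Nat.Coprime.symm htcop)
  have hden : (a : ℝ) * 3 ^ k - (t : ℝ) * 2 ^ c ≠ 0 := by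
    exact_mod_cast sub_ne_zero.mpr (Int.mul_three_pow_ne_mul_two_pow (by omega) h3t a c)
  exact hm a b c d hden
    (slope_eq_of_div_eq_mul_sub_div (by positivity) (by positivity) (by positivity) hden hline)

/-- Let `x₀ = t / 3^k` with `k ≥ 1`, `0 < t < 3^k`, `gcd(t,3) = 1`. If `m : ℝ` avoids all
values `(q * 2^(r-s) * 3^k) / (p * 3^k - t * 2^r)` (for `p, q ∈ ℤ`, `r, s ∈ ℕ`, with
nonzero denominator), then the line `y = m * (x - x₀)` contains no dyadic point
`(a / 2^c, b / 2^d)` with `a, b ∈ ℤ`, `c, d ∈ ℕ`. -/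
theorem T_fractal_slope_avoids_dyadic (k t : ℕ) (hk : 1 ≤ k) (ht0 : 0 < t)
    (ht : t < 3 ^ k) (htcop : Nat.gcd t 3 = 1) (m : ℝ)
    (hm : ∀ (p q : ℤ) (r s : ℕ), (p : ℝ) * 3 ^ k - (t : ℝ) * 2 ^ r ≠ 0 →
      m ≠ ((q : ℝ) * 2 ^ r * 3 ^ k) / (((p : ℝ) * 3 ^ k - (t : ℝ) * 2 ^ r) * 2 ^ s)) :
    ∀ (a b : ℤ) (c d : ℕ),
      (b : ℝ) / 2 ^ d ≠ m * ((a : ℝ) / 2 ^ c - (t : ℝ) / 3 ^ k) :=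
  T_fractal_slope_avoids_dyadic_general k t hk htcop m hm
end

section
/- Let x₀ = t/3^k with k, t ∈ ℕ, k ≥ 1, 0 < t < 3^k, and gcd(t,3) = 1, and let m = 2^γ/(2α+1)^β for natural numbers α, β, γ. Then for every p, q ∈ ℤ and r, s ∈ ℕ, the point (p/2^r, q/2^s) does not lie on the line y = m(x − x₀). -/
/-!
Clearing denominators turns `q / 2^s = 2^γ / d * (p / 2^r - t / 3^k)` into the integer identity
`q d 2^r 3^k = 2^(γ+s) (p 3^k - t 2^r)`. Since `k ≥ 1` the left side is divisible by `3`, while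
the right side is `≡ -2^(γ+s+r) t ≢ 0 (mod 3)` because `3 ∤ t`.
-/

section

variable {ℓ : ℤ} (hℓ : Prime ℓ) (hℓ2 : ¬ ℓ ∣ 2)
include hℓ hℓ2

theorem Prime.not_dvd_two_pow (n : ℕ) : ¬ ℓ ∣ 2 ^ n :=
  fun h => hℓ2 (hℓ.dvd_of_dvd_pow h)

theorem Prime.not_dvd_mul_pow_sub_mul_two_pow {t : ℤ} (ht : ¬ ℓ ∣ t) {k : ℕ} (hk : k ≠ 0)
    (p : ℤ) (r : ℕ) : ¬ ℓ ∣ p * ℓ ^ k - t * 2 ^ r := by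
  intro h
  have htr : ℓ ∣ t * 2 ^ r :=
    (dvd_sub_right (dvd_mul_of_dvd_right (dvd_pow_self ℓ hk) p)).mp h
  exact (hℓ.dvd_or_dvd htr).elim ht (hℓ.not_dvd_two_pow hℓ2 r)

theorem Prime.dyadic_ne_two_pow_div_mul_sub {t : ℤ} (ht : ¬ ℓ ∣ t) {k : ℕ} (hk : k ≠ 0)
    {d : ℤ} (hd : d ≠ 0) (γ : ℕ) (p q : ℤ) (r s : ℕ) :
    (q : ℝ) / 2 ^ s ≠ 2 ^ γ / d * ((p : ℝ) / 2 ^ r - t / ℓ ^ k) := by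
  intro h
  have hℓ0 : (ℓ : ℝ) ≠ 0 := by exact_mod_cast hℓ.ne_zero
  have hdR : (d : ℝ) ≠ 0 := by exact_mod_cast hd
  have cleared : q * d * 2 ^ r * ℓ ^ k = 2 ^ (γ + s) * (p * ℓ ^ k - t * 2 ^ r) := by
    have : (q : ℝ) * d * 2 ^ r * ℓ ^ k = 2 ^ (γ + s) * (p * ℓ ^ k - t * 2 ^ r) := by
      field_simp at h
      rw [pow_add]
      linear_combination h
    exact_mod_cast this
  have hdvd : ℓ ∣ 2 ^ (γ + s) * (p * ℓ ^ k - t * 2 ^ r) :=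
    cleared ▸ dvd_mul_of_dvd_right (dvd_pow_self ℓ hk) _
  exact (hℓ.dvd_or_dvd hdvd).elim (hℓ.not_dvd_two_pow hℓ2 _)
    (hℓ.not_dvd_mul_pow_sub_mul_two_pow hℓ2 ht hk p r)

end

theorem T_fractal_admissible_slopes_general (k t : ℕ) (hk : 1 ≤ k)
    (htcop : Nat.gcd t 3 = 1) (α β γ : ℕ) (m : ℝ)
    (hm : m = (2 : ℝ) ^ γ / ((2 * α + 1 : ℕ) : ℝ) ^ β) :
    ∀ (p q : ℤ) (r s : ℕ),
      (q : ℝ) / 2 ^ s ≠ m * ((p : ℝ) / 2 ^ r - (t : ℝ) / 3 ^ k) := by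
  intro p q r s
  have h3t : ¬ (3 : ℤ) ∣ t := by
    exact_mod_cast (Nat.Prime.coprime_iff_not_dvd Nat.prime_three).mp (Nat.Coprime.symm htcop)
  have hd : ((2 * α + 1 : ℕ) : ℤ) ^ β ≠ 0 := by positivity
  have key := Int.prime_three.dyadic_ne_two_pow_div_mul_sub (by decide) h3t
    (by omega : k ≠ 0) hd γ p q r s
  subst hm
  push_cast at key ⊢
  exact key

/-- Let `x₀ = t / 3^k` with `k ≥ 1`, `0 < t < 3^k`, `gcd(t,3) = 1`, and let
`m = 2^γ / (2α+1)^β` for natural numbers `α, β, γ`. Then no dyadic point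
`(p / 2^r, q / 2^s)` with `p, q ∈ ℤ`, `r, s ∈ ℕ` lies on the line `y = m * (x - x₀)`. -/
theorem T_fractal_admissible_slopes (k t : ℕ) (hk : 1 ≤ k) (ht0 : 0 < t)
    (ht : t < 3 ^ k) (htcop : Nat.gcd t 3 = 1) (α β γ : ℕ) (m : ℝ)
    (hm : m = (2 : ℝ) ^ γ / ((2 * α + 1 : ℕ) : ℝ) ^ β) :
    ∀ (p q : ℤ) (r s : ℕ),
      (q : ℝ) / 2 ^ s ≠ m * ((p : ℝ) / 2 ^ r - (t : ℝ) / 3 ^ k) :=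
  T_fractal_admissible_slopes_general k t hk htcop α β γ m hm
end

section
/- Let a = 2k+1 ≥ 3 be odd and consider the line L through (1/2, 0) with slope 1 ∈ B_3 ⊆ B_a. Then L, i.e., { (1/2 + t, t) : t ∈ ℝ }, when folded into the unit square by reflections, avoids the open middle square (k/a, (k+1)/a)² for a = 3; equivalently, for all t, the folded point F(1/2 + t, t) does not lie in (1/3, 2/3) × (1/3, 2/3), where F is the coordinatewise fold onto [0,1]. -/
open Set

/-- The folding map `ℝ → [0,1]`: the distance from `x` to the nearest even integer. -/
noncomputable def fold (x : ℝ) : ℝ := |x - 2 * ⌊(x + 1) / 2⌋|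

/-- The coordinatewise folding map `ℝ² → [0,1]²`. -/
noncomputable def Fold (p : ℝ × ℝ) : ℝ × ℝ := (fold p.1, fold p.2)

/-!
The folded line is `2`-periodic in `t`, so we may take `t = u ∈ [-1, 1)`. There
`fold u = |u|`, while `fold (1/2 + u)` is `|1/2 + u|` or `3/2 - u`. If `|u| ∈ (1/3, 2/3)`,
the first is below `1/6` or above `5/6`, and the second is above `5/6`.
-/

theorem fold_periodic : Function.Periodic fold 2 := by
  intro x
  have hshift : (x + 2 + 1) / 2 = (x + 1) / 2 + (1 : ℤ) := by push_cast; ring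
  rw [fold, fold, hshift, Int.floor_add_intCast]
  push_cast
  ring_nf

theorem fold_of_mem_Ico {x : ℝ} (hx : x ∈ Ico (-1) 1) : fold x = |x| := by
  have hfloor : ⌊(x + 1) / 2⌋ = 0 :=
    Int.floor_eq_zero_iff.mpr ⟨by linarith [hx.1], by linarith [hx.2]⟩
  simp [fold, hfloor]

theorem fold_of_mem_Icc_one_two {x : ℝ} (hx : x ∈ Icc 1 2) : fold x = 2 - x :=
  calc fold x = fold (x - 2) := by simpa using fold_periodic (x - 2)
    _ = |x - 2| := fold_of_mem_Ico ⟨by linarith [hx.1], by linarith [hx.2]⟩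
    _ = 2 - x := by rw [abs_of_nonpos (by linarith [hx.2])]; ring

theorem fold_half_add_of_mem_Ico {u : ℝ} (hu : u ∈ Ico (-1) 1) :
    fold (1 / 2 + u) = |1 / 2 + u| ∨ fold (1 / 2 + u) = 3 / 2 - u := by
  rcases lt_or_ge (1 / 2 + u) 1 with hlt | hge
  · exact Or.inl (fold_of_mem_Ico ⟨by linarith [hu.1], hlt⟩)
  · right
    rw [fold_of_mem_Icc_one_two ⟨hge, by linarith [hu.2]⟩]
    ring

/-- The line through `(1/2, 0)` with slope `1 ∈ B₃`, folded into the unit square by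
reflections, avoids the open middle square `(1/3, 2/3)²` of the `1/3`-Sierpinski carpet:
for all `t`, `F(1/2 + t, t) ∉ (1/3, 2/3) × (1/3, 2/3)`. -/
theorem slope_one_line_avoids_middle_square :
    ∀ t : ℝ, Fold (1 / 2 + t, t) ∉ Ioo (1 / 3 : ℝ) (2 / 3) ×ˢ Ioo (1 / 3 : ℝ) (2 / 3) := by
  intro t
  have hper : Function.Periodic (fun t : ℝ => Fold (1 / 2 + t, t)) 2 := fun t => by
    simp only [Fold, ← add_assoc, fold_periodic _]
  obtain ⟨u, hu, heq⟩ := hper.exists_mem_Ico two_pos t (-1)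
  norm_num at hu
  rw [show Fold (1 / 2 + t, t) = Fold (1 / 2 + u, u) from heq]
  rintro ⟨⟨hx₁, hx₂⟩, hy₁, hy₂⟩
  simp only [Fold, fold_of_mem_Ico hu] at hx₁ hx₂ hy₁ hy₂
  rcases fold_half_add_of_mem_Ico hu with hx | hx <;> rw [hx] at hx₁ hx₂ <;>
    rcases abs_cases u with ⟨hu', _⟩ | ⟨hu', _⟩ <;>
    rcases abs_cases (1 / 2 + u) with ⟨hv, _⟩ | ⟨hv, _⟩ <;> linarith
end
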